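/- arXiv:2510.25442 — 3 statements merged into one kernel-verified Lean document; each statement's English description precedes it below -/
import Mathlib

section
/- Let f : ℝ → (0,∞) be continuous, 1-periodic, even, differentiable on (0,1), and suppose there exist constants C > 0 and ε > 0 with f(t) ≤ f(0) − Ct for all 0 ≤ t < ε. Let X = {x^0,…,x^{N−1}} ⊆ 𝕋^d be an N-point configuration such that x^0_1 = x^1_1 = … = x^j_1 for some j ≥ 1 and x^k_1 ≠ x^0_1 for all k > j. For r ∈ [−1/2, 1/2) let X_r be the configuration obtained by replacing x^0 with (x^0_1 + r, x^0_2, …, x^0_d). Then the function r ↦ E_F(X_r) does not have a local minimum at r = 0. -/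
open Finset Real

/-- Tensor product energy of `N` points in `𝕋^d ≃ [0,1)^d`:
`E_F(X) = Σ_{k ≠ ℓ} ∏_i f(x_i^k − x_i^ℓ)`. -/
noncomputable def energyProd {N d : ℕ} (f : ℝ → ℝ) (x : Fin N → Fin d → ℝ) : ℝ :=
  ∑ k : Fin N, ∑ ℓ : Fin N, if k = ℓ then 0 else ∏ i : Fin d, f (x k i - x ℓ i)

open Filter Topology Function

/-! Moving `x⁰` by `r` along the first axis changes the energy by
`2 ∑_{ℓ ≠ 0} w_ℓ (f (a_ℓ + r) - f a_ℓ)`, where `a_ℓ = x⁰₁ - xˡ₁` and the weight `w_ℓ > 0` is the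
product of the factors of the other coordinates. The points sharing the first coordinate of `x⁰`
(`a_ℓ = 0`, e.g. `ℓ = 1`) contribute `S (f r - f 0) ≤ -S C |r|` with `S > 0`, a downward kink,
while every other term is differentiable at `r = 0`, since then `a_ℓ ∈ (-1, 1) \ {0}`. A downward
kink plus a differentiable function has no local minimum: the differentiable part would have to
grow like `S C |r|`, forcing its right slope to be `≥ S C` and its left slope `≤ -S C`. -/

theorem Function.Periodic.even_of_eq_sub {f : ℝ → ℝ} {p : ℝ} (hp : Periodic f p)
    (h : ∀ t, f t = f (p - t)) : f.Even := fun t => by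
  rw [h, sub_neg_eq_add, add_comm, hp]

theorem Function.Periodic.differentiableAt_of_differentiableOn_Ioo {E : Type*}
    [NormedAddCommGroup E] [NormedSpace ℝ E] {f : ℝ → E} {p b : ℝ} (hp : Periodic f p)
    (hf : DifferentiableOn ℝ f (Set.Ioo 0 p)) (hb : b ∈ Set.Ioo (-p) p) (hb0 : b ≠ 0) :
    DifferentiableAt ℝ f b := by
  rcases hb0.lt_or_gt with hneg | hpos
  · have hshift : DifferentiableAt ℝ (fun t => f (t + p)) b :=
      (hf.differentiableAt (Ioo_mem_nhds (by linarith [hb.1]) (by linarith))).comp b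
        (differentiableAt_id.add_const p)
    rwa [funext hp] at hshift
  · exact hf.differentiableAt (Ioo_mem_nhds hpos hb.2)

theorem Function.Even.eventually_le_sub_mul_abs {f : ℝ → ℝ} (hf : f.Even) {C ε : ℝ}
    (hε : 0 < ε) (h : ∀ t, 0 ≤ t → t < ε → f t ≤ f 0 - C * t) :
    ∀ᶠ r in 𝓝 0, f r ≤ f 0 - C * |r| := by
  filter_upwards [Ioo_mem_nhds (neg_neg_iff_pos.2 hε) hε] with r ⟨hr₁, hr₂⟩
  rcases le_or_gt 0 r with hr | hr
  · rw [abs_of_nonneg hr]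
    exact h r hr hr₂
  · rw [abs_of_neg hr, ← hf r]
    exact h (-r) (by linarith) (by linarith)

theorem not_differentiableAt_of_eventually_mul_abs_le {g : ℝ → ℝ} {a c : ℝ} (hc : 0 < c)
    (h : ∀ᶠ r in 𝓝 a, c * |r - a| ≤ g r - g a) : ¬ DifferentiableAt ℝ g a := by
  intro hg
  have hslope : ∀ s : Set ℝ, a ∉ s → Tendsto (slope g a) (𝓝[s] a) (𝓝 (deriv g a)) :=
    fun s hs => (hasDerivWithinAt_iff_tendsto_slope' hs).1 hg.hasDerivAt.hasDerivWithinAt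
  have hright : c ≤ deriv g a := by
    refine ge_of_tendsto (hslope (Set.Ioi a) (lt_irrefl a)) ?_
    filter_upwards [nhdsWithin_le_nhds h, self_mem_nhdsWithin] with r hr (har : a < r)
    rw [slope_def_field, le_div_iff₀ (sub_pos.2 har)]
    rwa [abs_of_pos (sub_pos.2 har)] at hr
  have hleft : deriv g a ≤ -c := by
    refine le_of_tendsto (hslope (Set.Iio a) (lt_irrefl a)) ?_
    filter_upwards [nhdsWithin_le_nhds h, self_mem_nhdsWithin] with r hr (hra : r < a)
    rw [slope_def_field, div_le_iff_of_neg (sub_neg.2 hra)]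
    rw [abs_of_neg (sub_neg.2 hra)] at hr
    linarith
  linarith

theorem not_isLocalMin_add_of_eventually_le_sub_mul_abs {φ g : ℝ → ℝ} {a c : ℝ} (hc : 0 < c)
    (hφ : ∀ᶠ r in 𝓝 a, φ r ≤ φ a - c * |r - a|) (hg : DifferentiableAt ℝ g a) :
    ¬ IsLocalMin (φ + g) a := by
  intro hmin
  refine not_differentiableAt_of_eventually_mul_abs_le hc ?_ hg
  filter_upwards [hmin, hφ] with r hr hφr
  simp only [Pi.add_apply] at hr
  linarith

theorem not_isLocalMin_sum_mul_sub {ι : Type*} (s : Finset ι) {f : ℝ → ℝ} {w a : ι → ℝ}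
    {C : ℝ} (hC : 0 < C) (hf : ∀ᶠ r in 𝓝 0, f r ≤ f 0 - C * |r|) (hw : ∀ ℓ ∈ s, 0 < w ℓ)
    (ha : ∀ ℓ ∈ s, a ℓ ≠ 0 → DifferentiableAt ℝ f (a ℓ)) (h₀ : ∃ ℓ ∈ s, a ℓ = 0) :
    ¬ IsLocalMin (fun r => ∑ ℓ ∈ s, w ℓ * (f (a ℓ + r) - f (a ℓ))) 0 := by
  classical
  obtain ⟨ℓ₀, hℓ₀, haℓ₀⟩ := h₀
  set S := ∑ ℓ ∈ s with a ℓ = 0, w ℓ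
  have hS : 0 < S := sum_pos' (fun ℓ hℓ => (hw ℓ (mem_filter.1 hℓ).1).le)
    ⟨ℓ₀, mem_filter.2 ⟨hℓ₀, haℓ₀⟩, hw ℓ₀ hℓ₀⟩
  have hsplit : (fun r => ∑ ℓ ∈ s, w ℓ * (f (a ℓ + r) - f (a ℓ)))
      = (fun r => S * (f r - f 0))
        + fun r => ∑ ℓ ∈ s with a ℓ ≠ 0, w ℓ * (f (a ℓ + r) - f (a ℓ)) := by
    funext r
    rw [Pi.add_apply, ← sum_filter_add_sum_filter_not s (fun ℓ => a ℓ = 0), sum_mul]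
    congr 1
    exact sum_congr rfl fun ℓ hℓ => by rw [(mem_filter.1 hℓ).2, zero_add]
  rw [hsplit]
  refine not_isLocalMin_add_of_eventually_le_sub_mul_abs (mul_pos hS hC) ?_ ?_
  · filter_upwards [hf] with r hr
    rw [sub_self, mul_zero, sub_zero, zero_sub]
    linarith [mul_le_mul_of_nonneg_left hr hS.le]
  · refine DifferentiableAt.fun_sum fun ℓ hℓ => ?_
    obtain ⟨hℓs, haℓ⟩ := mem_filter.1 hℓ
    have hfa := ha ℓ hℓs haℓ
    rw [← add_zero (a ℓ)] at hfa
    exact ((hfa.comp 0 (differentiableAt_id.const_add (a ℓ))).sub_const _).const_mul _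

theorem sum_sum_eq_sum_erase_add_two_mul {ι R : Type*} [Fintype ι] [DecidableEq ι]
    [CommSemiring R] (T : ι → ι → R) (hT : ∀ k ℓ, T k ℓ = T ℓ k) (z : ι) (hz : T z z = 0) :
    ∑ k, ∑ ℓ, T k ℓ = ∑ k ∈ univ.erase z, ∑ ℓ ∈ univ.erase z, T k ℓ
      + 2 * ∑ ℓ ∈ univ.erase z, T z ℓ := by
  simp only [← add_sum_erase univ _ (mem_univ z), hz, zero_add, sum_add_distrib]
  simp only [hT _ z]
  ring

theorem energyProd_update {N d : ℕ} {f : ℝ → ℝ} (hf : f.Even) (x : Fin N → Fin d → ℝ)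
    (z : Fin N) (v : Fin d → ℝ) :
    energyProd f (update x z v) = energyProd f x
      + 2 * ∑ ℓ ∈ univ.erase z, (∏ i, f (v i - x ℓ i) - ∏ i, f (x z i - x ℓ i)) := by
  have hsymm : ∀ (y : Fin N → Fin d → ℝ) (k ℓ : Fin N),
      (if k = ℓ then 0 else ∏ i, f (y k i - y ℓ i))
        = if ℓ = k then 0 else ∏ i, f (y ℓ i - y k i) := by
    intro y k ℓ
    simp only [eq_comm (a := k), ← hf (y k _ - y ℓ _), neg_sub]
  have hrest : ∀ k ∈ univ.erase z, ∀ ℓ ∈ univ.erase z,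
      (if k = ℓ then 0 else ∏ i, f (update x z v k i - update x z v ℓ i))
        = if k = ℓ then 0 else ∏ i, f (x k i - x ℓ i) := fun k hk ℓ hℓ => by
    rw [update_of_ne (ne_of_mem_erase hk), update_of_ne (ne_of_mem_erase hℓ)]
  have hrow : ∀ y : Fin N → Fin d → ℝ, (∀ ℓ ≠ z, y ℓ = x ℓ) → ∀ ℓ ∈ univ.erase z,
      (if z = ℓ then 0 else ∏ i, f (y z i - y ℓ i)) = ∏ i, f (y z i - x ℓ i) :=
    fun y hy ℓ hℓ => by rw [if_neg (ne_of_mem_erase hℓ).symm, hy ℓ (ne_of_mem_erase hℓ)]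
  rw [energyProd, energyProd, sum_sum_eq_sum_erase_add_two_mul _ (hsymm _) z (if_pos rfl),
    sum_sum_eq_sum_erase_add_two_mul _ (hsymm x) z (if_pos rfl),
    sum_congr rfl fun k hk => sum_congr rfl (hrest k hk),
    sum_congr rfl (hrow _ fun ℓ hℓ => update_of_ne hℓ v x),
    sum_congr rfl (hrow x fun _ _ => rfl), update_self, sum_sub_distrib]
  ring

theorem energyProd_update_add {N d : ℕ} {f : ℝ → ℝ} (hf : f.Even) (x : Fin N → Fin d → ℝ)
    (z : Fin N) (i₀ : Fin d) (r : ℝ) :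
    energyProd f (update x z (update (x z) i₀ (x z i₀ + r))) = energyProd f x
      + 2 * ∑ ℓ ∈ univ.erase z, (∏ i ∈ univ.erase i₀, f (x z i - x ℓ i))
          * (f (x z i₀ - x ℓ i₀ + r) - f (x z i₀ - x ℓ i₀)) := by
  rw [energyProd_update hf]
  congr 2
  refine sum_congr rfl fun ℓ _ => ?_
  rw [← mul_prod_erase _ _ (mem_univ i₀),
    ← mul_prod_erase _ (fun i => f (x z i - x ℓ i)) (mem_univ i₀),
    prod_congr rfl fun i hi => by rw [update_of_ne (ne_of_mem_erase hi)], update_self,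
    add_sub_right_comm]
  ring

theorem energy_not_localMin_of_shared_coordinate_general (N d : ℕ)
    (hN : 0 < N) (hd : 0 < d) (f : ℝ → ℝ)
    (hf_per : Function.Periodic f 1)
    (hf_even : ∀ t, f t = f (1 - t))
    (hf_pos : ∀ t, 0 < f t)
    (hf_diff : DifferentiableOn ℝ f (Set.Ioo 0 1))
    (C ε : ℝ) (hC : 0 < C) (hε : 0 < ε)
    (hf_kink : ∀ t : ℝ, 0 ≤ t → t < ε → f t ≤ f 0 - C * t)
    (x : Fin N → Fin d → ℝ) (hx : ∀ k i, x k i ∈ Set.Ico (0 : ℝ) 1)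
    (j : ℕ) (hj1 : 1 ≤ j) (hjN : j < N)
    (hsame : ∀ k : Fin N, (k : ℕ) ≤ j → x k ⟨0, hd⟩ = x ⟨0, hN⟩ ⟨0, hd⟩) :
    ¬ IsLocalMin (fun r : ℝ =>
        energyProd f (Function.update x ⟨0, hN⟩
          (Function.update (x ⟨0, hN⟩) ⟨0, hd⟩ (x ⟨0, hN⟩ ⟨0, hd⟩ + r)))) 0 := by
  set z : Fin N := ⟨0, hN⟩
  set i₀ : Fin d := ⟨0, hd⟩
  have heven : f.Even := hf_per.even_of_eq_sub hf_even
  intro hmin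
  refine not_isLocalMin_sum_mul_sub (univ.erase z)
    (w := fun ℓ => ∏ i ∈ univ.erase i₀, f (x z i - x ℓ i)) (a := fun ℓ => x z i₀ - x ℓ i₀)
    hC (heven.eventually_le_sub_mul_abs hε hf_kink)
    (fun ℓ _ => prod_pos fun i _ => hf_pos _) (fun ℓ _ hℓ => ?_) ⟨⟨1, by omega⟩, ?_, ?_⟩ ?_
  · obtain ⟨hz₀, hz₁⟩ := hx z i₀
    obtain ⟨hℓ₀, hℓ₁⟩ := hx ℓ i₀
    exact hf_per.differentiableAt_of_differentiableOn_Ioo hf_diff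
      ⟨by linarith, by linarith⟩ hℓ
  · simp [z, Fin.ext_iff]
  · exact sub_eq_zero.2 (hsame ⟨1, _⟩ hj1).symm
  · filter_upwards [hmin] with r hr
    rw [energyProd_update_add heven, energyProd_update_add heven] at hr
    simp only [add_zero, sub_self, mul_zero, sum_const_zero] at hr ⊢
    linarith

/-- Perturbation argument: if `f` is a continuous, 1-periodic, even, positive
potential, differentiable on `(0,1)` and with a sharp kink at the origin
(`f(t) ≤ f(0) − Ct` for small `t ≥ 0`), and if in the configuration `X` the
points `x^0,…,x^j` (`j ≥ 1`) share their first coordinate while no further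
point does, then moving the first coordinate of `x^0` by `r`, the resulting
energy `r ↦ E_F(X_r)` does not have a local minimum at `r = 0`. -/
theorem energy_not_localMin_of_shared_coordinate (N d : ℕ)
    (hN : 0 < N) (hd : 0 < d) (f : ℝ → ℝ)
    (hf_cont : Continuous f)
    (hf_per : Function.Periodic f 1)
    (hf_even : ∀ t, f t = f (1 - t))
    (hf_pos : ∀ t, 0 < f t)
    (hf_diff : DifferentiableOn ℝ f (Set.Ioo 0 1))
    (C ε : ℝ) (hC : 0 < C) (hε : 0 < ε)
    (hf_kink : ∀ t : ℝ, 0 ≤ t → t < ε → f t ≤ f 0 - C * t)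
    (x : Fin N → Fin d → ℝ) (hx : ∀ k i, x k i ∈ Set.Ico (0 : ℝ) 1)
    (j : ℕ) (hj1 : 1 ≤ j) (hjN : j < N)
    (hsame : ∀ k : Fin N, (k : ℕ) ≤ j → x k ⟨0, hd⟩ = x ⟨0, hN⟩ ⟨0, hd⟩)
    (hdiffc : ∀ k : Fin N, j < (k : ℕ) → x k ⟨0, hd⟩ ≠ x ⟨0, hN⟩ ⟨0, hd⟩) :
    ¬ IsLocalMin (fun r : ℝ =>
        energyProd f (Function.update x ⟨0, hN⟩
          (Function.update (x ⟨0, hN⟩) ⟨0, hd⟩ (x ⟨0, hN⟩ ⟨0, hd⟩ + r)))) 0 :=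
  energy_not_localMin_of_shared_coordinate_general N d hN hd f hf_per hf_even hf_pos hf_diff C ε hC
    hε hf_kink x hx j hj1 hjN hsame
end

section
/- Let f : ℝ → (0,∞) be continuous, 1-periodic, even, differentiable on (0,1), and suppose there exist constants C > 0 and ε > 0 with f(t) ≤ f(0) − Ct for all 0 ≤ t < ε. If X = {x^0,…,x^{N−1}} ⊆ 𝕋^d is a local minimizer of the tensor product energy E_F (with respect to the product metric on (𝕋^d)^N), then x_i^k ≠ x_i^ℓ for all coordinates i = 1,…,d and all k ≠ ℓ; i.e. all points of X have pairwise distinct coordinates in every coordinate direction. -/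
open Finset Real

open Function Filter Topology

/-!
Move a single coordinate `x_i^k` by `t`. Only the interactions of `x^k` with the other points
change, and each of them contributes `c_m f(x_i^k − x_i^m + t)` with `c_m > 0`. If `x_i^ℓ = x_i^k`
for some `ℓ ≠ k`, these terms add up to a positive multiple of `f(t)`, which has a downward kink
`f(t) ≤ f(0) − C|t|` at `0`, while all other terms are differentiable at `t = 0`, since `f` is
differentiable off the integers. A kink plus a differentiable function has no local minimum there.
-/

theorem not_isLocalMin_add_of_kink {h g : ℝ → ℝ} {a c : ℝ} (hc : 0 < c)
    (hh : ∀ᶠ t in 𝓝 a, h t ≤ h a - c * |t - a|) (hg : DifferentiableAt ℝ g a) :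
    ¬ IsLocalMin (fun t => h t + g t) a := by
  intro hmin
  have hg_ge : ∀ᶠ t in 𝓝 a, g a + c * |t - a| ≤ g t := by
    filter_upwards [hmin, hh] with t hmin_t hh_t
    linarith
  -- `g ∓ c (t - a)` both have a local minimum at `a`, forcing `g'(a) = c = -c`.
  have hlin : HasDerivAt (fun t => c * (t - a)) c a := by
    simpa using ((hasDerivAt_id a).sub_const a).const_mul c
  have hright : IsLocalMin (fun t => g t - c * (t - a)) a := by
    filter_upwards [hg_ge] with t ht
    nlinarith [le_abs_self (t - a)]
  have hleft : IsLocalMin (fun t => g t + c * (t - a)) a := by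
    filter_upwards [hg_ge] with t ht
    nlinarith [neg_abs_le (t - a)]
  have h₁ := hright.hasDerivAt_eq_zero (hg.hasDerivAt.sub hlin)
  have h₂ := hleft.hasDerivAt_eq_zero (hg.hasDerivAt.add hlin)
  linarith

theorem not_isLocalMin_sum_shift_of_kink {ι : Type*} {f : ℝ → ℝ} {C : ℝ} (hC : 0 < C)
    (hkink : ∀ᶠ t in 𝓝 0, f t ≤ f 0 - C * |t|) (s : Finset ι) (c δ : ι → ℝ)
    (hc : ∀ m ∈ s, 0 < c m) (hzero : ∃ m ∈ s, δ m = 0)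
    (hdiff : ∀ m ∈ s, δ m ≠ 0 → DifferentiableAt ℝ f (δ m)) :
    ¬ IsLocalMin (fun t => ∑ m ∈ s, c m * f (δ m + t)) 0 := by
  classical
  set cA := ∑ m ∈ s with δ m = 0, c m
  have hcA : 0 < cA := by
    obtain ⟨m, hm, hδ⟩ := hzero
    exact sum_pos (fun n hn => hc n (mem_filter.1 hn).1) ⟨m, mem_filter.2 ⟨hm, hδ⟩⟩
  have hsplit : (fun t => ∑ m ∈ s, c m * f (δ m + t))
      = fun t => cA * f t + ∑ m ∈ s with δ m ≠ 0, c m * f (δ m + t) := by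
    ext t
    rw [← sum_filter_add_sum_filter_not s (fun m => δ m = 0), sum_mul]
    congr 1
    exact sum_congr rfl fun m hm => by rw [(mem_filter.1 hm).2, zero_add]
  rw [hsplit]
  refine not_isLocalMin_add_of_kink (mul_pos hcA hC) ?_ ?_
  · filter_upwards [hkink] with t ht
    rw [sub_zero, mul_assoc, ← mul_sub]
    exact mul_le_mul_of_nonneg_left ht hcA.le
  · refine DifferentiableAt.fun_sum fun m hm => (DifferentiableAt.comp _ ?_ ?_).const_mul _
    · rw [add_zero]
      exact hdiff m (mem_filter.1 hm).1 (mem_filter.1 hm).2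
    · fun_prop

theorem eventually_le_sub_mul_abs_of_kink {f : ℝ → ℝ} {C ε : ℝ} (heven : ∀ t, f (-t) = f t)
    (hε : 0 < ε) (hkink : ∀ t : ℝ, 0 ≤ t → t < ε → f t ≤ f 0 - C * t) :
    ∀ᶠ t in 𝓝 0, f t ≤ f 0 - C * |t| := by
  filter_upwards [Ioo_mem_nhds (neg_lt_zero.2 hε) hε] with t ht
  rcases le_total 0 t with h | h
  · rw [abs_of_nonneg h]
    exact hkink t h ht.2
  · rw [abs_of_nonpos h, ← heven t]
    exact hkink (-t) (neg_nonneg.2 h) (by linarith [ht.1])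

theorem Function.Periodic.differentiableAt_of_fract_ne_zero {f : ℝ → ℝ} (hper : Periodic f 1)
    (hdiff : DifferentiableOn ℝ f (Set.Ioo 0 1)) {s : ℝ} (hs : Int.fract s ≠ 0) :
    DifferentiableAt ℝ f s := by
  have hshift : f = fun y => f (y - ⌊s⌋) := funext fun y => by
    simpa using (hper.sub_int_mul_eq ⌊s⌋ (x := y)).symm
  have hmem : Int.fract s ∈ Set.Ioo 0 1 := ⟨(Int.fract_nonneg s).lt_of_ne' hs, Int.fract_lt_one s⟩
  have hfract : DifferentiableAt ℝ f (s - ⌊s⌋) := by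
    rw [Int.self_sub_floor]
    exact (hdiff _ hmem).differentiableAt (isOpen_Ioo.mem_nhds hmem)
  rw [hshift]
  exact hfract.comp s (by fun_prop)

theorem Int.fract_sub_ne_zero {a b : ℝ} (ha : a ∈ Set.Ico 0 1) (hb : b ∈ Set.Ico 0 1)
    (hab : a ≠ b) : Int.fract (a - b) ≠ 0 := by
  intro h
  obtain ⟨z, hz⟩ := Int.fract_eq_zero_iff.1 h
  have : Int.fract a = Int.fract b := Int.fract_eq_fract.2 ⟨z, hz.symm⟩
  rw [Int.fract_eq_self.2 ha, Int.fract_eq_self.2 hb] at this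
  exact hab this

section Energy

variable {N d : ℕ} {f : ℝ → ℝ}

noncomputable def interactionEnergy (f : ℝ → ℝ) (z : Fin N → Fin d → ℝ) (k : Fin N) : ℝ :=
  ∑ m ∈ univ.erase k, ∏ j, f (z k j - z m j)

theorem energyProd_eq_add_interactionEnergy (heven : ∀ t, f (-t) = f t)
    (z : Fin N → Fin d → ℝ) (k : Fin N) :
    energyProd f z = (∑ a ∈ univ.erase k, ∑ b ∈ univ.erase k,
        if a = b then 0 else ∏ j, f (z a j - z b j)) + 2 * interactionEnergy f z k := by
  have hrow : ∀ a ∈ univ.erase k,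
      (∑ b, if a = b then 0 else ∏ j, f (z a j - z b j))
        = ∏ j, f (z k j - z a j)
          + ∑ b ∈ univ.erase k, if a = b then 0 else ∏ j, f (z a j - z b j) := by
    intro a ha
    rw [← add_sum_erase _ _ (mem_univ k), if_neg (ne_of_mem_erase ha)]
    congr 1
    exact prod_congr rfl fun j _ => by rw [← neg_sub, heven]
  have hcol : ∑ b ∈ univ.erase k, (if k = b then 0 else ∏ j, f (z k j - z b j))
      = interactionEnergy f z k :=
    sum_congr rfl fun b hb => if_neg (ne_of_mem_erase hb).symm
  rw [energyProd, ← add_sum_erase _ _ (mem_univ k), ← add_sum_erase _ _ (mem_univ k), if_pos rfl,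
    zero_add, hcol, sum_congr rfl hrow, sum_add_distrib]
  simp only [interactionEnergy]
  ring

theorem energyProd_sub_energyProd (heven : ∀ t, f (-t) = f t) {y z : Fin N → Fin d → ℝ}
    {k : Fin N} (hyz : ∀ a ≠ k, y a = z a) :
    energyProd f y - energyProd f z = 2 * (interactionEnergy f y k - interactionEnergy f z k) := by
  rw [energyProd_eq_add_interactionEnergy heven y k, energyProd_eq_add_interactionEnergy heven z k]
  have hrest : (∑ a ∈ univ.erase k, ∑ b ∈ univ.erase k,
        if a = b then 0 else ∏ j, f (y a j - y b j))
      = ∑ a ∈ univ.erase k, ∑ b ∈ univ.erase k, if a = b then 0 else ∏ j, f (z a j - z b j) :=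
    sum_congr rfl fun a ha => sum_congr rfl fun b hb => by
      rw [hyz a (ne_of_mem_erase ha), hyz b (ne_of_mem_erase hb)]
  rw [hrest]
  ring

theorem IsLocalMin.interactionEnergy_comp (heven : ∀ t, f (-t) = f t)
    {x : Fin N → Fin d → ℝ} (hmin : IsLocalMin (energyProd f) x) {k : Fin N}
    {α : Type*} [TopologicalSpace α] {u : α → Fin N → Fin d → ℝ} {t₀ : α}
    (hu : ContinuousAt u t₀) (hu₀ : u t₀ = x) (hfix : ∀ t, ∀ a ≠ k, u t a = x a) :
    IsLocalMin (fun t => interactionEnergy f (u t) k) t₀ := by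
  rw [← hu₀] at hmin
  filter_upwards [hmin.comp_continuous hu] with t ht
  have hdiff := energyProd_sub_energyProd heven (hfix t)
  simp only [comp_apply, hu₀] at ht ⊢
  linarith

theorem interactionEnergy_update_add (x : Fin N → Fin d → ℝ) (k : Fin N) (i : Fin d) (t : ℝ) :
    interactionEnergy f (update x k (update (x k) i (x k i + t))) k
      = ∑ m ∈ univ.erase k, (∏ j ∈ univ.erase i, f (x k j - x m j)) * f (x k i - x m i + t) := by
  refine sum_congr rfl fun m hm => ?_
  rw [update_self, update_of_ne (ne_of_mem_erase hm), ← mul_prod_erase _ _ (mem_univ i),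
    update_self, mul_comm, add_sub_right_comm]
  congr 1
  exact prod_congr rfl fun j hj => by rw [update_of_ne (ne_of_mem_erase hj)]

end Energy

theorem localMin_energy_distinct_coordinates_general (N d : ℕ) (f : ℝ → ℝ)
    (hf_per : Function.Periodic f 1)
    (hf_even : ∀ t, f t = f (1 - t))
    (hf_pos : ∀ t, 0 < f t)
    (hf_diff : DifferentiableOn ℝ f (Set.Ioo 0 1))
    (C ε : ℝ) (hC : 0 < C) (hε : 0 < ε)
    (hf_kink : ∀ t : ℝ, 0 ≤ t → t < ε → f t ≤ f 0 - C * t)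
    (x : Fin N → Fin d → ℝ) (hx : ∀ k i, x k i ∈ Set.Ico (0 : ℝ) 1)
    (hmin : IsLocalMin (fun y : Fin N → Fin d → ℝ => energyProd f y) x) :
    ∀ (i : Fin d) (k ℓ : Fin N), k ≠ ℓ → x k i ≠ x ℓ i := by
  intro i k ℓ hkℓ hcoord
  have heven : ∀ t, f (-t) = f t := fun t => by rw [hf_even, sub_neg_eq_add, add_comm, hf_per]
  have hloc : IsLocalMin
      (fun t => interactionEnergy f (update x k (update (x k) i (x k i + t))) k) 0 :=
    IsLocalMin.interactionEnergy_comp heven hmin (by fun_prop) (by simp)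
      fun t a ha => update_of_ne ha _ _
  simp only [interactionEnergy_update_add] at hloc
  refine not_isLocalMin_sum_shift_of_kink hC (eventually_le_sub_mul_abs_of_kink heven hε hf_kink)
    _ _ _ (fun m _ => prod_pos fun j _ => hf_pos _)
    ⟨ℓ, mem_erase.2 ⟨hkℓ.symm, mem_univ ℓ⟩, sub_eq_zero.2 hcoord⟩ (fun m _ hm => ?_) hloc
  exact hf_per.differentiableAt_of_fract_ne_zero hf_diff
    (Int.fract_sub_ne_zero (hx k i) (hx m i) (sub_ne_zero.1 hm))

/-- Local energy minimizers have pairwise distinct coordinates: if `f` is a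
continuous, 1-periodic, even, positive potential, differentiable on `(0,1)`,
with a sharp kink at the origin (`f(t) ≤ f(0) − Ct` for small `t ≥ 0`), and
`X` is a local minimizer of the tensor product energy `E_F` (with respect to
the product metric on `(𝕋^d)^N`), then all points of `X` have pairwise
distinct coordinates in every coordinate direction. -/
theorem localMin_energy_distinct_coordinates (N d : ℕ) (f : ℝ → ℝ)
    (hf_cont : Continuous f)
    (hf_per : Function.Periodic f 1)
    (hf_even : ∀ t, f t = f (1 - t))
    (hf_pos : ∀ t, 0 < f t)
    (hf_diff : DifferentiableOn ℝ f (Set.Ioo 0 1))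
    (C ε : ℝ) (hC : 0 < C) (hε : 0 < ε)
    (hf_kink : ∀ t : ℝ, 0 ≤ t → t < ε → f t ≤ f 0 - C * t)
    (x : Fin N → Fin d → ℝ) (hx : ∀ k i, x k i ∈ Set.Ico (0 : ℝ) 1)
    (hmin : IsLocalMin (fun y : Fin N → Fin d → ℝ => energyProd f y) x) :
    ∀ (i : Fin d) (k ℓ : Fin N), k ≠ ℓ → x k i ≠ x ℓ i :=
  localMin_energy_distinct_coordinates_general N d f hf_per hf_even hf_pos hf_diff C ε hC hε hf_kink
    x hx hmin
end

section
/- Let N ∈ ℕ and let f : ℝ → [0,∞) be 1-periodic and even. Then for every permutation σ of {0,1,…,N−1} one has E_F(X_id) ≥ E_F(X_σ), where id denotes the identity permutation; i.e. among all N-point permutation sets in 𝕋², the diagonal set {(k/N, k/N) : k = 0,…,N−1} has the largest tensor product energy. -/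
open Finset Real

/-- The permutation set `X_σ = {(k/N, σ(k)/N) : k = 0,…,N−1} ⊂ 𝕋²`. -/
noncomputable def permSet {N : ℕ} (σ : Equiv.Perm (Fin N)) : Fin N → Fin 2 → ℝ :=
  fun k => ![((k : ℕ) : ℝ) / N, ((σ k : ℕ) : ℝ) / N]

/-- Among all `N`-point permutation sets in `𝕋²`, the diagonal set
`X_id = {(k/N, k/N)}` has the largest tensor product energy: for any
1-periodic, even, nonnegative `f` and any permutation `σ`,
`E_F(X_id) ≥ E_F(X_σ)`. -/
theorem diagonal_permSet_maximizes (N : ℕ) (f : ℝ → ℝ)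
    (hf_nonneg : ∀ t, 0 ≤ f t)
    (hf_per : Function.Periodic f 1)
    (hf_even : ∀ t, f t = f (1 - t))
    (σ : Equiv.Perm (Fin N)) :
    energyProd f (permSet (Equiv.refl (Fin N))) ≥ energyProd f (permSet σ) := by
  set g : Fin N → Fin N → ℝ := fun k ℓ => f (((k : ℕ) : ℝ) / N - ((ℓ : ℕ) : ℝ) / N) with hg
  have key : ∀ τ : Equiv.Perm (Fin N), energyProd f (permSet τ) =
      ∑ k : Fin N, ∑ ℓ : Fin N, if k = ℓ then 0 else g k ℓ * g (τ k) (τ ℓ) := by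
    intro τ
    unfold energyProd permSet
    refine Finset.sum_congr rfl fun k _ => Finset.sum_congr rfl fun ℓ _ => ?_
    by_cases h : k = ℓ <;> simp [h, Fin.prod_univ_two, hg]
  rw [key, key]
  simp only [Equiv.refl_apply]
  set H : Fin N → Fin N → ℝ := fun a b => if a = b then 0 else g a b * g a b with hH
  have reindex : (∑ k : Fin N, ∑ ℓ : Fin N, H (σ k) (σ ℓ))
      = ∑ k : Fin N, ∑ ℓ : Fin N, H k ℓ := by
    calc (∑ k : Fin N, ∑ ℓ : Fin N, H (σ k) (σ ℓ))
        = ∑ k : Fin N, ∑ ℓ : Fin N, H (σ k) ℓ :=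
          Finset.sum_congr rfl fun k _ => Equiv.sum_comp σ (H (σ k))
      _ = ∑ k : Fin N, ∑ ℓ : Fin N, H k ℓ := Equiv.sum_comp σ (fun k => ∑ ℓ, H k ℓ)
  rw [ge_iff_le]
  calc (∑ k : Fin N, ∑ ℓ : Fin N, if k = ℓ then 0 else g k ℓ * g (σ k) (σ ℓ))
      ≤ ∑ k : Fin N, ∑ ℓ : Fin N, (H k ℓ + H (σ k) (σ ℓ)) / 2 := by
        refine Finset.sum_le_sum fun k _ => Finset.sum_le_sum fun ℓ _ => ?_
        by_cases h : k = ℓ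
        · subst h; simp [hH]
        · have h' : σ k ≠ σ ℓ := fun hc => h (σ.injective hc)
          simp only [h, hH, h', if_false]
          nlinarith [sq_nonneg (g k ℓ - g (σ k) (σ ℓ))]
    _ = ((∑ k : Fin N, ∑ ℓ : Fin N, H k ℓ) + ∑ k : Fin N, ∑ ℓ : Fin N, H (σ k) (σ ℓ)) / 2 := by
        simp only [← Finset.sum_div, ← Finset.sum_add_distrib]
    _ = ∑ k : Fin N, ∑ ℓ : Fin N, H k ℓ := by rw [reindex]; ring
    _ = ∑ k : Fin N, ∑ ℓ : Fin N, if k = ℓ then 0 else g k ℓ * g k ℓ := rfl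
end
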